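/- Let G be a group acting on a type F of features (a MulAction of G on F), let P be an additive commutative group, ψ : F → P, κ : P → ℝ, T : ℕ, and g : Fin T → G. Suppose the feature extractor is G-equivariant in the sense that there is a fixed object feature multiset S₀ : Multiset F with S t = (S₀).map (fun f => (g t) • f) for every t : Fin T. Then for every p : P, the cycle-accumulated Hough map satisfies Ā[S, g](p) = T • ((S₀.map (fun f => κ (p - ψ f))).sum); in particular Ā[S, g] is independent of the gaze sequence g, so the accumulator (and hence its maximizer set) is saccade-invariant. -/
import Mathlib

/-- The cycle-accumulated generalized Hough transform: each feature `f` of glimpse `t`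
is re-registered by the inverse gaze transform `(g t)⁻¹` and votes
`κ (p - ψ ((g t)⁻¹ • f))` for each parameter `p`; votes are summed over all glimpses. -/
noncomputable def houghAccum {G F P : Type*} [Group G] [MulAction G F]
    [AddCommGroup P] (ψ : F → P) (κ : P → ℝ) (T : ℕ)
    (S : Fin T → Multiset F) (g : Fin T → G) (p : P) : ℝ :=
  ∑ t : Fin T, ((S t).map (fun f => κ (p - ψ ((g t)⁻¹ • f)))).sum

/-- **GHT saccade invariance via cycle accumulation.**
If the feature extractor is `G`-equivariant, i.e. the features of glimpse `t` are exactly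
the gaze-transformed copies `g t • f` of a fixed object feature multiset `S₀`, then the
cycle-accumulated Hough accumulator equals `T` copies of the object-centric vote sum, and
in particular is independent of the gaze sequence `g`. -/
theorem houghAccum_saccade_invariant
    (G F P : Type*) [Group G] [MulAction G F] [AddCommGroup P]
    (ψ : F → P) (κ : P → ℝ) (T : ℕ)
    (S : Fin T → Multiset F) (g : Fin T → G) (S₀ : Multiset F)
    (hS : ∀ t : Fin T, S t = S₀.map (fun f => (g t) • f)) :
    ∀ p : P, houghAccum ψ κ T S g p = T • ((S₀.map (fun f => κ (p - ψ f))).sum) := by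
  intro p
  unfold houghAccum
  have h : ∀ t : Fin T, ((S t).map (fun f => κ (p - ψ ((g t)⁻¹ • f)))).sum
      = ((S₀.map (fun f => κ (p - ψ f))).sum) := by
    intro t
    rw [hS t, Multiset.map_map]
    congr 1
    ext f
    simp [inv_smul_smul]
  simp [h, Finset.sum_const]
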